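/- Finite-state slow growth law: Let S be an infinite binary sequence, let f be a function on infinite binary sequences computable by an information lossless finite-state transducer, and let S' = f(S). If S' is finite-state deep, then S is finite-state deep. -/

import Mathlib

/-- A finite-state transducer with state set `Fin n`, binary input alphabet,
binary-string outputs, initial state `q0`, and all states reachable from `q0`. -/
structure FST where
  /-- number of states -/
  n : ℕ
  npos : 0 < n
  /-- transition function -/
  δ : Fin n → Bool → Fin n
  /-- output function -/
  ν : Fin n → Bool → List Bool
  /-- initial state -/
  q0 : Fin n
  /-- every state is reachable from the initial state -/
  reach : ∀ q : Fin n, ∃ x : List Bool, x.foldl δ q0 = q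

namespace FST

/-- The state reached from state `q` after reading input `x`. -/
def stateFrom (T : FST) (q : Fin T.n) (x : List Bool) : Fin T.n := x.foldl T.δ q

/-- The extended transition function: the state reached from the initial state on input `x`. -/
def finalState (T : FST) (x : List Bool) : Fin T.n := T.stateFrom T.q0 x

/-- The output produced starting from state `q` on input `x`. -/
def outFrom (T : FST) : Fin T.n → List Bool → List Bool
  | _, [] => []
  | q, a :: x => T.ν q a ++ T.outFrom (T.δ q a) x

/-- The output of `T` on input `x` (started in the initial state). -/
def out (T : FST) (x : List Bool) : List Bool := T.outFrom T.q0 x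

/-- `T` is information lossless if the pair (output, final state) determines the input. -/
def IL (T : FST) : Prop := Function.Injective fun x : List Bool => (T.out x, T.finalState x)

/-- The data of an FST, as a member of an encodable type. -/
def toSigma (T : FST) :
    Σ n : ℕ, (Fin n → Bool → Fin n) × (Fin n → Bool → List Bool) × Fin n :=
  ⟨T.n, T.δ, T.ν, T.q0⟩

/-- The length `|T|` of the standard binary encoding of the FST `T`. -/
noncomputable def size (T : FST) : ℕ := Nat.size (Encodable.encode T.toSigma)

end FST

/-- The `k`-FS decompression complexity of `x`: the length of a shortest program `p`
such that some FST of encoding length at most `k` outputs `x` on input `p`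
(`⊤` if there is no such program). -/
noncomputable def Dfs (k : ℕ) (x : List Bool) : ℕ∞ :=
  ⨅ (p : List Bool) (_ : ∃ T : FST, T.size ≤ k ∧ T.out p = x), (p.length : ℕ∞)

/-- The first `n` bits of the infinite sequence `S`, as a list. -/
def pre (S : ℕ → Bool) (n : ℕ) : List Bool := (List.range n).map S

/-- A sequence is finite-state deep if for some `α > 0` and every `k` there is `k'` such that
`Dfs k (S↾n) - Dfs k' (S↾n) ≥ α n` for infinitely many `n`. -/
def FSDeep (S : ℕ → Bool) : Prop :=
  ∃ α : ℝ, 0 < α ∧ ∀ k : ℕ, ∃ k' : ℕ, ∃ᶠ n in Filter.atTop,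
    Dfs k' (pre S n) + (⌈α * n⌉₊ : ℕ∞) ≤ Dfs k (pre S n)

/-- `T` computes the sequence `R` from the sequence `S`: the outputs on prefixes of `S`
have unbounded length and are prefixes of `R`. -/
def FST.computes (T : FST) (S R : ℕ → Bool) : Prop :=
  Filter.Tendsto (fun n => (T.out (pre S n)).length) Filter.atTop Filter.atTop ∧
  ∀ n : ℕ, T.out (pre S n) = pre R (T.out (pre S n)).length


/-!
Composing with `M` and dropping at most `M.maxOut` trailing bits turns a program for `S↾t` into
one for `S'↾m` whenever `m ≤ |M(S↾t)| ≤ m + M.maxOut`, at a bounded cost in machine size.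
Conversely, a program `p` for `S'↾m` can be inverted through `M` at the price of a factor
`1 + ε` in length: cut `p` into blocks of length `L` and precede each with a constant-size
advice (the state of `M` after the block and the at most `M.maxOut` bits by which the outputs of
`U` and of `M` are out of step there); information losslessness makes the input of `M` matching
each block unique, so a finite-state machine can output it. For large `m` a gap `α m` for
`S'↾m` thus leaves a gap of at least `α m / 2` for `S↾t`, which is linear in `t` because
information losslessness forces `t < (|M(S↾t)| + 1) · M.n`.
-/

open Filter

instance {α : Type*} [Finite α] (n : ℕ) : Finite {l : List α // l.length ≤ n} :=
  (List.finite_length_le α n).to_subtype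

section Segments

variable {α : Type*} (S : ℕ → α)

def seg (a b : ℕ) : List α := (List.range' a (b - a)).map S

theorem seg_length (a b : ℕ) : (seg S a b).length = b - a := by simp [seg]

theorem seg_eq_nil {a b : ℕ} (h : b ≤ a) : seg S a b = [] := by
  simp [seg, Nat.sub_eq_zero_of_le h]

theorem seg_append {a b c : ℕ} (hab : a ≤ b) (hbc : b ≤ c) :
    seg S a b ++ seg S b c = seg S a c := by
  have h := List.range'_append (s := a) (m := b - a) (n := c - b) (step := 1)
  rw [show a + 1 * (b - a) = b by omega, show b - a + (c - b) = c - a by omega] at h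
  rw [seg, seg, seg, ← List.map_append, h]

theorem seg_eq_append {a b : ℕ} {u v : List α} (h : seg S a b = u ++ v) :
    u = seg S a (a + u.length) ∧ v = seg S (a + u.length) b := by
  obtain ⟨l₁, l₂, hl, rfl, rfl⟩ := List.map_eq_append_iff.1 h
  obtain ⟨k, -, rfl, rfl⟩ := List.range'_eq_append_iff.1 hl
  simp only [seg, List.length_map, List.length_range', mul_one]
  constructor <;> congr 2 <;> omega

end Segments

theorem pre_eq_seg (S : ℕ → Bool) (n : ℕ) : pre S n = seg S 0 n := by
  simp [pre, seg, List.range_eq_range']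

theorem pre_length (S : ℕ → Bool) (n : ℕ) : (pre S n).length = n := by simp [pre]

theorem pre_take (S : ℕ → Bool) (i n : ℕ) : (pre S n).take i = pre S (min i n) := by
  rw [pre, ← List.map_take, List.take_range, pre]

theorem pre_append_seg (S : ℕ → Bool) {a b : ℕ} (h : a ≤ b) : pre S a ++ seg S a b = pre S b := by
  rw [pre_eq_seg, pre_eq_seg]
  exact seg_append S (Nat.zero_le a) h

/-- A transducer with an arbitrary finite type of states, not necessarily all reachable. -/
structure Machine where
  σ : Type
  [finite : Finite σ]
  δ : σ → Bool → σ
  ν : σ → Bool → List Bool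
  q0 : σ

attribute [instance] Machine.finite

namespace Machine

variable (R : Machine)

def stateFrom (q : R.σ) (x : List Bool) : R.σ := x.foldl R.δ q

def outFrom (R : Machine) : R.σ → List Bool → List Bool
  | _, [] => []
  | q, a :: x => R.ν q a ++ R.outFrom (R.δ q a) x

def out (x : List Bool) : List Bool := R.outFrom R.q0 x

@[simp]
theorem stateFrom_nil (q : R.σ) : R.stateFrom q [] = q := rfl

@[simp]
theorem stateFrom_cons (q : R.σ) (a : Bool) (x : List Bool) :
    R.stateFrom q (a :: x) = R.stateFrom (R.δ q a) x := rfl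

@[simp]
theorem outFrom_nil (q : R.σ) : R.outFrom q [] = [] := rfl

@[simp]
theorem outFrom_cons (q : R.σ) (a : Bool) (x : List Bool) :
    R.outFrom q (a :: x) = R.ν q a ++ R.outFrom (R.δ q a) x := rfl

theorem stateFrom_append (q : R.σ) (x y : List Bool) :
    R.stateFrom q (x ++ y) = R.stateFrom (R.stateFrom q x) y :=
  List.foldl_append

theorem outFrom_append (q : R.σ) (x y : List Bool) :
    R.outFrom q (x ++ y) = R.outFrom q x ++ R.outFrom (R.stateFrom q x) y := by
  induction x generalizing q with
  | nil => rfl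
  | cons a x ih => simp [ih]

end Machine

namespace FST

variable (T : FST)

abbrev toMachine : Machine := ⟨Fin T.n, T.δ, T.ν, T.q0⟩

theorem toMachine_stateFrom (q : Fin T.n) (x : List Bool) :
    T.toMachine.stateFrom q x = T.stateFrom q x := rfl

theorem toMachine_outFrom (q : Fin T.n) (x : List Bool) :
    T.toMachine.outFrom q x = T.outFrom q x := by
  induction x generalizing q with
  | nil => rfl
  | cons a x ih => simp only [Machine.outFrom_cons, ih]; rfl

theorem toMachine_out (x : List Bool) : T.toMachine.out x = T.out x :=
  T.toMachine_outFrom T.q0 x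

theorem outFrom_append (q : Fin T.n) (x y : List Bool) :
    T.outFrom q (x ++ y) = T.outFrom q x ++ T.outFrom (T.stateFrom q x) y := by
  simpa only [toMachine_outFrom, toMachine_stateFrom] using T.toMachine.outFrom_append q x y

theorem out_append (x y : List Bool) :
    T.out (x ++ y) = T.out x ++ T.outFrom (T.finalState x) y :=
  T.outFrom_append T.q0 x y

theorem finalState_append (x y : List Bool) :
    T.finalState (x ++ y) = T.stateFrom (T.finalState x) y :=
  List.foldl_append

/-- Every state is reachable, so information losslessness holds from every state. -/
theorem IL.injective_outFrom_stateFrom {T : FST} (hT : T.IL) (q : Fin T.n) :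
    Function.Injective fun v => (T.outFrom q v, T.stateFrom q v) := by
  obtain ⟨x₀, rfl⟩ := T.reach q
  intro v w h
  simp only [Prod.mk.injEq] at h
  refine List.append_cancel_left (hT (a₁ := x₀ ++ v) (a₂ := x₀ ++ w) ?_)
  simp only [Prod.mk.injEq, out_append, finalState_append]
  exact ⟨congrArg _ h.1, h.2⟩

def maxOut : ℕ := Finset.univ.sup fun qb : Fin T.n × Bool => (T.ν qb.1 qb.2).length

theorem length_ν_le_maxOut (q : Fin T.n) (b : Bool) : (T.ν q b).length ≤ T.maxOut :=
  Finset.le_sup (f := fun qb : Fin T.n × Bool => (T.ν qb.1 qb.2).length) (Finset.mem_univ (q, b))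

theorem toSigma_injective : Function.Injective toSigma := by
  rintro ⟨n, _, δ, ν, q0, _⟩ ⟨n', _, δ', ν', q0', _⟩ h
  obtain ⟨rfl, h⟩ := Sigma.mk.inj_iff.1 h
  simp only [heq_eq_eq, Prod.mk.injEq] at h
  obtain ⟨rfl, rfl, rfl⟩ := h
  rfl

theorem finite_setOf_size_le (k : ℕ) : {T : FST | T.size ≤ k}.Finite := by
  refine ((Set.finite_lt_nat (2 ^ k)).preimage
    (Encodable.encode_injective.comp toSigma_injective).injOn).subset fun T hT => ?_
  exact Nat.size_le.1 hT

theorem exists_bound_of_size_le (k : ℕ) (G : FST → ℕ) : ∃ K, ∀ T : FST, T.size ≤ k → G T ≤ K := by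
  obtain ⟨K, hK⟩ := ((finite_setOf_size_le k).image G).bddAbove
  exact ⟨K, fun T hT => hK ⟨T, hT, rfl⟩⟩

end FST

namespace Machine

variable (R : Machine)

def reachable : Machine where
  σ := {q : R.σ // ∃ x, R.stateFrom R.q0 x = q}
  δ q b := ⟨R.δ q.1 b, by
    obtain ⟨x, hx⟩ := q.2
    exact ⟨x ++ [b], by rw [stateFrom_append, hx]; rfl⟩⟩
  ν q b := R.ν q.1 b
  q0 := ⟨R.q0, [], rfl⟩

instance : Nonempty R.reachable.σ := ⟨R.reachable.q0⟩

theorem reachable_stateFrom_val (q : R.reachable.σ) (x : List Bool) :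
    (R.reachable.stateFrom q x).1 = R.stateFrom q.1 x := by
  induction x generalizing q with
  | nil => rfl
  | cons a x ih => exact ih _

noncomputable def toFST : FST :=
  letI e := Finite.equivFin R.reachable.σ
  { n := Nat.card R.reachable.σ
    npos := Nat.card_pos
    δ := fun i b => e (R.reachable.δ (e.symm i) b)
    ν := fun i b => R.reachable.ν (e.symm i) b
    q0 := e R.reachable.q0
    reach := fun i => by
      obtain ⟨x, hx⟩ := (e.symm i).2
      refine ⟨x, ?_⟩
      rw [List.foldl_hom e (g₁ := R.reachable.δ) fun q b => by simp, ← e.eq_symm_apply]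
      exact Subtype.ext ((R.reachable_stateFrom_val _ x).trans hx) }

theorem toFST_outFrom (i : Fin R.toFST.n) (x : List Bool) :
    R.toFST.outFrom i x = R.outFrom ((Finite.equivFin R.reachable.σ).symm i).1 x := by
  induction x generalizing i with
  | nil => rfl
  | cons a x ih =>
    rw [FST.outFrom, ih, outFrom_cons]
    change R.ν _ a ++ R.outFrom ((Finite.equivFin R.reachable.σ).symm
      (Finite.equivFin R.reachable.σ (R.reachable.δ _ a))).1 x = _
    rw [Equiv.symm_apply_apply]
    rfl

theorem toFST_out (x : List Bool) : R.toFST.out x = R.out x := by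
  rw [FST.out, toFST_outFrom]
  change R.outFrom ((Finite.equivFin R.reachable.σ).symm
    (Finite.equivFin R.reachable.σ R.reachable.q0)).1 x = _
  rw [Equiv.symm_apply_apply]
  rfl

end Machine

theorem Dfs_le {k : ℕ} {x p : List Bool} (h : ∃ T : FST, T.size ≤ k ∧ T.out p = x) :
    Dfs k x ≤ p.length :=
  iInf₂_le p h

theorem Machine.Dfs_le (R : Machine) {k : ℕ} {x p : List Bool} (hR : R.toFST.size ≤ k)
    (hp : R.out p = x) : Dfs k x ≤ p.length :=
  _root_.Dfs_le ⟨R.toFST, hR, by rw [R.toFST_out, hp]⟩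

theorem exists_Dfs_eq {k : ℕ} {x : List Bool} (h : Dfs k x ≠ ⊤) :
    ∃ p : List Bool, (∃ T : FST, T.size ≤ k ∧ T.out p = x) ∧ Dfs k x = p.length := by
  rw [Dfs, iInf_subtype'] at h ⊢
  have : Nonempty {p // ∃ T : FST, T.size ≤ k ∧ T.out p = x} := by
    by_contra hne
    exact h (by simp [not_nonempty_iff.1 hne])
  obtain ⟨⟨p, hp⟩, hp'⟩ := ENat.exists_eq_iInf fun p : {p // ∃ T : FST, T.size ≤ k ∧ T.out p = x} =>
    (p.1.length : ℕ∞)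
  exact ⟨p, hp, hp'.symm⟩

theorem Dfs_map_le {k k' : ℕ} (g : List Bool → List Bool)
    (h : ∀ T : FST, T.size ≤ k → ∃ T' : FST, T'.size ≤ k' ∧ ∀ p, T'.out p = g (T.out p))
    (x : List Bool) : Dfs k' (g x) ≤ Dfs k x := by
  refine le_iInf₂ fun p ⟨T, hT, hp⟩ => ?_
  obtain ⟨T', hT', hT'p⟩ := h T hT
  exact Dfs_le ⟨T', hT', by rw [hT'p, hp]⟩

theorem Dfs_anti {k k' : ℕ} (hk : k ≤ k') (x : List Bool) : Dfs k' x ≤ Dfs k x :=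
  Dfs_map_le id (fun T hT => ⟨T, hT.trans hk, fun _ => rfl⟩) x

namespace Machine

protected abbrev id : Machine := ⟨Unit, fun _ _ => (), fun _ b => [b], ()⟩

theorem id_out (x : List Bool) : Machine.id.out x = x := by
  suffices ∀ q, Machine.id.outFrom q x = x from this _
  induction x with
  | nil => exact fun _ => rfl
  | cons a x ih => exact fun q => congrArg (a :: ·) (ih _)

abbrev comp (A B : Machine) : Machine where
  σ := B.σ × A.σ
  δ q b := (B.δ q.1 b, A.stateFrom q.2 (B.ν q.1 b))
  ν q b := A.outFrom q.2 (B.ν q.1 b)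
  q0 := (B.q0, A.q0)

theorem comp_outFrom (A B : Machine) (qb : B.σ) (qa : A.σ) (x : List Bool) :
    (A.comp B).outFrom (qb, qa) x = A.outFrom qa (B.outFrom qb x) := by
  induction x generalizing qb qa with
  | nil => rfl
  | cons a x ih =>
    rw [outFrom_cons, outFrom_cons, A.outFrom_append, ← ih]

theorem comp_out (A B : Machine) (x : List Bool) : (A.comp B).out x = A.out (B.out x) :=
  comp_outFrom A B B.q0 A.q0 x

abbrev delay (r : ℕ) : Machine where
  σ := {l : List Bool // l.length ≤ r}
  δ l b := ⟨(l.1 ++ [b]).drop (l.1.length + 1 - r), by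
    rw [List.length_drop, List.length_append, List.length_singleton]; omega⟩
  ν l b := (l.1 ++ [b]).take (l.1.length + 1 - r)
  q0 := ⟨[], by simp⟩

theorem delay_outFrom_append_stateFrom (r : ℕ) (l : (delay r).σ) (x : List Bool) :
    (delay r).outFrom l x ++ ((delay r).stateFrom l x).1 = l.1 ++ x := by
  induction x generalizing l with
  | nil => simp
  | cons a x ih =>
    rw [outFrom_cons, stateFrom_cons, List.append_assoc, ih, ← List.append_assoc,
      List.take_append_drop, List.append_assoc, List.singleton_append]

theorem delay_stateFrom_length (r : ℕ) (l : (delay r).σ) (x : List Bool) :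
    ((delay r).stateFrom l x).1.length = min r (l.1.length + x.length) := by
  induction x generalizing l with
  | nil => simpa using l.2
  | cons a x ih =>
    rw [stateFrom_cons, ih]
    simp only [List.length_drop, List.length_append, List.length_cons, List.length_nil]
    omega

theorem delay_out (r : ℕ) (x : List Bool) : (delay r).out x = x.rdrop r := by
  have h : (delay r).out x ++ ((delay r).stateFrom (delay r).q0 x).1 = x :=
    delay_outFrom_append_stateFrom r _ x
  have hl : ((delay r).stateFrom (delay r).q0 x).1.length = min r (0 + x.length) :=
    delay_stateFrom_length r _ x
  rw [zero_add] at hl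
  have hx := congrArg List.length h
  rw [List.length_append] at hx
  conv_rhs => rw [← h]
  rw [List.rdrop, List.take_left']
  rw [List.length_append]
  omega

end Machine

theorem Dfs_le_length {k : ℕ} (hk : Machine.id.toFST.size ≤ k) (x : List Bool) :
    Dfs k x ≤ x.length :=
  Machine.id.Dfs_le hk (Machine.id_out x)

theorem exists_Dfs_rdrop_out_le (M : FST) (k d : ℕ) :
    ∃ k', ∀ r ≤ d, ∀ x, Dfs k' ((M.out x).rdrop r) ≤ Dfs k x := by
  obtain ⟨K, hK⟩ := FST.exists_bound_of_size_le k fun T => (Finset.range (d + 1)).sup fun r =>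
    ((Machine.delay r).comp (M.toMachine.comp T.toMachine)).toFST.size
  refine ⟨K, fun r hr x => Dfs_map_le (fun y => (M.out y).rdrop r) (fun T hT =>
    ⟨((Machine.delay r).comp (M.toMachine.comp T.toMachine)).toFST, ?_, fun p => ?_⟩) x⟩
  · exact (Finset.le_sup (f := fun r => ((Machine.delay r).comp
      (M.toMachine.comp T.toMachine)).toFST.size) (Finset.mem_range.2 (by omega))).trans (hK T hT)
  · simp only [Machine.toFST_out, Machine.comp_out, Machine.delay_out, FST.toMachine_out]

theorem exists_le_lt_succ {f : ℕ → ℕ} (hf : Monotone f) (hf' : Tendsto f atTop atTop) {t μ : ℕ}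
    (h : f t ≤ μ) : ∃ t' ≥ t, f t' ≤ μ ∧ μ < f (t' + 1) := by
  classical
  have hex : ∃ n, μ < f n := (hf'.eventually_gt_atTop μ).exists
  have htn : t < Nat.find hex := by
    by_contra! hn
    exact (Nat.find_spec hex).not_ge ((hf hn).trans h)
  obtain ⟨t', ht'⟩ : ∃ t', Nat.find hex = t' + 1 := ⟨Nat.find hex - 1, by omega⟩
  refine ⟨t', by omega, not_lt.1 (Nat.find_min hex (by omega)), ht' ▸ Nat.find_spec hex⟩

namespace FST

variable (M : FST) (S : ℕ → Bool)

def outLen (n : ℕ) : ℕ := (M.out (pre S n)).length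

theorem out_pre_of_le {a b : ℕ} (h : a ≤ b) :
    M.out (pre S b) = M.out (pre S a) ++ M.outFrom (M.finalState (pre S a)) (seg S a b) := by
  rw [← pre_append_seg S h, out_append]

theorem finalState_pre_of_le {a b : ℕ} (h : a ≤ b) :
    M.finalState (pre S b) = M.stateFrom (M.finalState (pre S a)) (seg S a b) := by
  rw [← pre_append_seg S h, finalState_append]

theorem outLen_mono : Monotone (M.outLen S) := fun a b h => by
  simp [outLen, M.out_pre_of_le S h]

theorem outLen_succ_le (n : ℕ) : M.outLen S (n + 1) ≤ M.outLen S n + M.maxOut := by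
  have hseg : seg S n (n + 1) = [S n] := by simp [seg]
  simp only [outLen, M.out_pre_of_le S n.le_succ, hseg, List.length_append, outFrom,
    List.append_nil]
  exact Nat.add_le_add_left (M.length_ν_le_maxOut _ _) _

theorem outLen_le (n : ℕ) : M.outLen S n ≤ M.maxOut * n := by
  induction n with
  | zero => rfl
  | succ n ih => rw [Nat.mul_succ]; linarith [M.outLen_succ_le S n]

variable {M S} {S' : ℕ → Bool}

theorem computes.out_pre (hf : M.computes S S') (n : ℕ) : M.out (pre S n) = pre S' (M.outLen S n) :=
  hf.2 n

theorem computes.outFrom_seg (hf : M.computes S S') {a b : ℕ} (h : a ≤ b) :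
    M.outFrom (M.finalState (pre S a)) (seg S a b) = seg S' (M.outLen S a) (M.outLen S b) := by
  have hab := M.out_pre_of_le S h
  rw [hf.out_pre, hf.out_pre, ← pre_append_seg S' (M.outLen_mono S h)] at hab
  exact (List.append_cancel_left hab).symm

theorem computes.exists_checkpoint (hf : M.computes S S') {t μ : ℕ} (h : M.outLen S t ≤ μ) :
    ∃ t' ≥ t, M.outLen S t' ≤ μ ∧ μ ≤ M.outLen S t' + M.maxOut := by
  obtain ⟨t', htt', h₁, h₂⟩ := exists_le_lt_succ (M.outLen_mono S) hf.1 h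
  exact ⟨t', htt', h₁, by linarith [M.outLen_succ_le S t']⟩

theorem computes.exists_overshoot (hf : M.computes S S') {t μ : ℕ} (h : M.outLen S t ≤ μ) :
    ∃ t' ≥ t, μ ≤ M.outLen S t' ∧ M.outLen S t' ≤ μ + M.maxOut := by
  obtain ⟨t', htt', h₁, h₂⟩ := exists_le_lt_succ (M.outLen_mono S) hf.1 h
  exact ⟨t' + 1, by omega, h₂.le, by linarith [M.outLen_succ_le S t']⟩

/-- The prefixes `S↾i`, `i ≤ n`, are told apart by their output length and final state. -/
theorem IL.succ_le_outLen_succ_mul (hM : M.IL) (hf : M.computes S S') (n : ℕ) :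
    n + 1 ≤ (M.outLen S n + 1) * M.n := by
  have hinj : Function.Injective fun i : Fin (n + 1) =>
      ((⟨M.outLen S i, Nat.lt_succ_of_le (M.outLen_mono S (Nat.le_of_lt_succ i.2))⟩ :
        Fin (M.outLen S n + 1)), M.finalState (pre S i)) := by
    intro i j hij
    simp only [Prod.mk.injEq, Fin.mk.injEq] at hij
    have hpre := hM (Prod.ext (by dsimp only; rw [hf.out_pre, hf.out_pre, hij.1]) hij.2)
    exact Fin.ext (by simpa only [pre_length] using congrArg List.length hpre)
  simpa using Fintype.card_le_of_injective _ hinj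

end FST

theorem exists_decoder (A : Type) [Finite A] [Nonempty A] :
    ∃ D, 0 < D ∧ ∃ dec : List Bool → A, ∀ a, ∃ w : List Bool, w.length = D ∧ dec w = a := by
  have := Fintype.ofFinite A
  obtain ⟨e⟩ := Function.Embedding.nonempty_of_card_le (α := A)
    (β := List.Vector Bool (Fintype.card A))
    (by rw [card_vector, Fintype.card_bool]; exact Nat.lt_two_pow_self.le)
  have hinj : Function.Injective fun a => (e a).toList :=
    List.Vector.toList_injective.comp e.injective
  exact ⟨Fintype.card A, Fintype.card_pos, Function.invFun _,
    fun a => ⟨(e a).toList, by simp, Function.leftInverse_invFun hinj a⟩⟩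

namespace Machine

abbrev BlockPhase (D L : ℕ) : Type :=
  Fin (L + 1) ⊕ Fin (L + 1) × {l : List Bool // l.length ≤ D + L}

variable {σ : Type} [Finite σ] (F : σ → List Bool → σ × List Bool) (D L : ℕ)

def blockStep : σ × BlockPhase D L → Bool → (σ × BlockPhase D L) × List Bool
  | (s, .inl n), false => ((s, .inl ⟨min (n + 1) L, by omega⟩), [])
  | (s, .inl n), true => ((s, .inr (n, ⟨[], by simp⟩)), [])
  | (s, .inr (lam, buf)), b =>
    if h : buf.1.length + 1 < D + lam then
      ((s, .inr (lam, ⟨buf.1 ++ [b], by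
        have := lam.is_le; rw [List.length_append, List.length_singleton]; omega⟩)), [])
    else (((F s (buf.1 ++ [b])).1, .inr (Fin.last L, ⟨[], by simp⟩)), (F s (buf.1 ++ [b])).2)

/-- Reads a header `0^λ 1` with `λ ≤ L`, then consecutive blocks of lengths
`D + λ, D + L, D + L, …`, applying `F` to each block as soon as it is complete. -/
abbrev blockMachine (s₀ : σ) : Machine where
  σ := σ × BlockPhase D L
  δ q b := (blockStep F D L q b).1
  ν q b := (blockStep F D L q b).2
  q0 := (s₀, .inl 0)

variable {F D L} {s₀ : σ}

theorem blockMachine_outFrom_header (s : σ) {n : ℕ} (hn : n ≤ L) (w : List Bool) :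
    (blockMachine F D L s₀).outFrom (s, .inl 0) (List.replicate n false ++ true :: w) =
      (blockMachine F D L s₀).outFrom (s, .inr (⟨n, by omega⟩, ⟨[], by simp⟩)) w := by
  suffices ∀ i (hi : i + n ≤ L),
      (blockMachine F D L s₀).outFrom (s, .inl ⟨i, by omega⟩)
          (List.replicate n false ++ true :: w) =
        (blockMachine F D L s₀).outFrom (s, .inr (⟨i + n, by omega⟩, ⟨[], by simp⟩)) w from
    by simpa using this 0 (by omega)
  induction n with
  | zero => intro i hi; rfl
  | succ n ih =>
    intro i hi
    rw [List.replicate_succ, List.cons_append, outFrom_cons]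
    have hδ : (blockMachine F D L s₀).δ (s, .inl ⟨i, by omega⟩) false =
        (s, .inl ⟨i + 1, by omega⟩) := by
      simp only [blockStep, Prod.mk.injEq, Sum.inl.injEq, Fin.mk.injEq, true_and]
      omega
    rw [hδ, ih (by omega) (i + 1) (by omega)]
    simp only [Nat.add_right_comm i 1 n, Nat.add_assoc]
    rfl

theorem blockMachine_outFrom_block (s : σ) {lam : Fin (L + 1)} {X : List Bool}
    (hX : X.length = D + lam) (hX0 : X ≠ []) (w : List Bool) :
    (blockMachine F D L s₀).outFrom (s, .inr (lam, ⟨[], by simp⟩)) (X ++ w) =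
      (F s X).2 ++
        (blockMachine F D L s₀).outFrom ((F s X).1, .inr (Fin.last L, ⟨[], by simp⟩)) w := by
  suffices ∀ buf : {l : List Bool // l.length ≤ D + L}, buf.1.length + X.length = D + lam →
      (blockMachine F D L s₀).outFrom (s, .inr (lam, buf)) (X ++ w) = (F s (buf.1 ++ X)).2 ++
        (blockMachine F D L s₀).outFrom ((F s (buf.1 ++ X)).1, .inr (Fin.last L, ⟨[], by simp⟩)) w
    from this _ (by simpa using hX)
  clear hX
  induction X with
  | nil => exact absurd rfl hX0
  | cons b X ih =>
    intro buf hbuf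
    rw [List.cons_append, outFrom_cons]
    by_cases hX' : X = []
    · subst hX'
      have hlast : ¬ buf.1.length + 1 < D + lam := by rw [List.length_singleton] at hbuf; omega
      simp only [blockStep, hlast, dite_false, List.nil_append]
    · have hmid : buf.1.length + 1 < D + lam := by
        have := List.length_pos_of_ne_nil hX'
        rw [List.length_cons] at hbuf; omega
      simp only [blockStep, hmid, dite_true, List.nil_append]
      rw [ih hX' _ (by
        rw [List.length_cons] at hbuf; rw [List.length_append, List.length_singleton]; omega)]
      simp

end Machine

namespace FST

variable (M : FST)

abbrev Residual : Type := {l : List Bool // l.length ≤ M.maxOut}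

def residual (l : List Bool) : M.Residual :=
  if h : l.length ≤ M.maxOut then ⟨l, h⟩ else ⟨[], by simp⟩

theorem residual_val {l : List Bool} (h : l.length ≤ M.maxOut) : (M.residual l).1 = l := by
  simp [residual, h]

/-- Advice for inverting `M` on one block: the state `M` reaches, the output not yet accounted
for by `M` (carried into the next block), and the output of `M` beyond the block. -/
abbrev Advice : Type := Fin M.n × M.Residual × M.Residual

open Classical in
noncomputable def pick (q : Fin M.n) (z : List Bool) (a : M.Advice) : List Bool :=
  if h : ∃ v, M.stateFrom q v = a.1 ∧ M.outFrom q v ++ a.2.1.1 = z ++ a.2.2.1 then h.choose else []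

theorem IL.pick_eq {M : FST} (hM : M.IL) {q : Fin M.n} {z v : List Bool} {a : M.Advice}
    (hs : M.stateFrom q v = a.1) (ho : M.outFrom q v ++ a.2.1.1 = z ++ a.2.2.1) :
    M.pick q z a = v := by
  have h : ∃ v, M.stateFrom q v = a.1 ∧ M.outFrom q v ++ a.2.1.1 = z ++ a.2.2.1 := ⟨v, hs, ho⟩
  rw [pick, dif_pos h]
  refine hM.injective_outFrom_stateFrom q (Prod.ext ?_ ?_)
  · exact List.append_cancel_right (h.choose_spec.2.trans ho.symm)
  · exact h.choose_spec.1.trans hs.symm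

variable (U : FST) (D L : ℕ) (dec : List Bool → M.Advice)

noncomputable def invStep (st : Fin U.n × Fin M.n × M.Residual) (X : List Bool) :
    (Fin U.n × Fin M.n × M.Residual) × List Bool :=
  ((U.stateFrom st.1 (X.drop D), (dec (X.take D)).1, (dec (X.take D)).2.1),
    M.pick st.2.1 (st.2.2.1 ++ U.outFrom st.1 (X.drop D)) (dec (X.take D)))

/-- Each block of its input is the code of an advice followed by a chunk of a program for `U`:
it runs `U` on the chunk and, guided by the advice, outputs the input of `M` producing that
output. -/
noncomputable abbrev inverter : Machine :=
  Machine.blockMachine (M.invStep U D dec) D L (U.q0, M.q0, ⟨[], by simp⟩)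

variable {U D L} (S S' : ℕ → Bool)

noncomputable def blockAdvice (t μ : ℕ) : M.Advice :=
  (M.finalState (pre S t), M.residual (seg S' (M.outLen S t) μ),
    M.residual (seg S' μ (M.outLen S t)))

/-- The state of `inverter` before a block, when `M` has read `S↾t` and `U` has output `S'↾μ`. -/
noncomputable def blockStart (s : Fin U.n) (t μ : ℕ) (lam : Fin (L + 1)) :
    (Fin U.n × Fin M.n × M.Residual) × Machine.BlockPhase D L :=
  ((s, M.finalState (pre S t), M.residual (seg S' (M.outLen S t) μ)), .inr (lam, ⟨[], by simp⟩))

variable {M S S'}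

theorem IL.invStep_append (hM : M.IL) (hf : M.computes S S') {s : Fin U.n} {t t' μ μ' : ℕ}
    {w y : List Bool} (htt' : t ≤ t') (hμ : M.outLen S t ≤ μ) (hμμ' : μ ≤ μ')
    (hr : μ ≤ M.outLen S t + M.maxOut) (hr' : μ' ≤ M.outLen S t' + M.maxOut)
    (he' : M.outLen S t' ≤ μ' + M.maxOut) (hU : U.outFrom s y = seg S' μ μ')
    (hw : w.length = D) (hwa : dec w = M.blockAdvice S S' t' μ') :
    M.invStep U D dec (s, M.finalState (pre S t), M.residual (seg S' (M.outLen S t) μ)) (w ++ y) =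
      ((U.stateFrom s y, M.finalState (pre S t'), M.residual (seg S' (M.outLen S t') μ')),
        seg S t t') := by
  simp only [invStep, List.take_left' hw, List.drop_left' hw, hwa, hU]
  refine Prod.ext rfl (hM.pick_eq (M.finalState_pre_of_le S htt').symm ?_)
  simp only [blockAdvice]
  rw [hf.outFrom_seg htt', M.residual_val (by rw [seg_length]; omega),
    M.residual_val (by rw [seg_length]; omega), M.residual_val (by rw [seg_length]; omega),
    seg_append S' hμ hμμ']
  have hmono := M.outLen_mono S htt'
  rcases le_total (M.outLen S t') μ' with h | h
  · rw [seg_eq_nil S' h, List.append_nil, seg_append S' hmono h]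
  · rw [seg_eq_nil S' h, List.append_nil, seg_append S' (hμ.trans hμμ') h]

theorem IL.inverter_outFrom_blockStart (hM : M.IL) (hf : M.computes S S') (hD : 0 < D)
    {s : Fin U.n} {t t' μ μ' : ℕ} {lam : Fin (L + 1)} {w y : List Bool} (htt' : t ≤ t')
    (hμ : M.outLen S t ≤ μ) (hμμ' : μ ≤ μ') (hr : μ ≤ M.outLen S t + M.maxOut)
    (hr' : μ' ≤ M.outLen S t' + M.maxOut) (he' : M.outLen S t' ≤ μ' + M.maxOut)
    (hU : U.outFrom s y = seg S' μ μ') (hw : w.length = D) (hwa : dec w = M.blockAdvice S S' t' μ')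
    (hy : y.length = lam) (rest : List Bool) :
    (M.inverter U D L dec).outFrom (M.blockStart S S' s t μ lam) (w ++ y ++ rest) =
      seg S t t' ++ (M.inverter U D L dec).outFrom
        (M.blockStart S S' (U.stateFrom s y) t' μ' (Fin.last L)) rest := by
  rw [blockStart, Machine.blockMachine_outFrom_block _ (by simp [hw, hy])
      (by simp [← List.length_pos_iff, hw, hD]),
    hM.invStep_append dec hf htt' hμ hμμ' hr hr' he' hU hw hwa]
  rfl

end FST

namespace FST

variable {M : FST} {S S' : ℕ → Bool} {U : FST} {D L : ℕ} {dec : List Bool → M.Advice}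

theorem IL.inverter_outFrom_blocks (hM : M.IL) (hf : M.computes S S') (hD : 0 < D)
    (hdec : ∀ a, ∃ w, w.length = D ∧ dec w = a) (m B : ℕ) :
    ∀ (lam : Fin (L + 1)) (y x : List Bool) (s : Fin U.n) (t μ : ℕ),
      y.length = lam → x.length = B * L → M.outLen S t ≤ μ → μ ≤ M.outLen S t + M.maxOut →
      μ ≤ m → U.outFrom s (y ++ x) = seg S' μ m →
      ∃ w t', w.length = (B + 1) * D + lam + B * L ∧ t ≤ t' ∧ m ≤ M.outLen S t' ∧
        M.outLen S t' ≤ m + M.maxOut ∧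
        (M.inverter U D L dec).outFrom (M.blockStart S S' s t μ lam) w = seg S t t' := by
  induction B with
  | zero =>
    intro lam y x s t μ hy hx hμ hr hμm hU
    rw [zero_mul, List.length_eq_zero_iff] at hx
    subst hx
    rw [List.append_nil] at hU
    obtain ⟨t', htt', hmt', ht'm⟩ := hf.exists_overshoot (hμ.trans hμm)
    obtain ⟨w, hw, hwa⟩ := hdec (M.blockAdvice S S' t' m)
    refine ⟨w ++ y, t', by simp [hw, hy], htt', hmt', ht'm, ?_⟩
    simpa using hM.inverter_outFrom_blockStart dec hf hD htt' hμ hμm hr (by omega) ht'm hU hw hwa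
      hy []
  | succ B ih =>
    intro lam y x s t μ hy hx hμ hr hμm hU
    obtain ⟨z, x', rfl, hz, hx'⟩ : ∃ z x', x = z ++ x' ∧ z.length = L ∧ x'.length = B * L :=
      ⟨x.take L, x.drop L, (List.take_append_drop L x).symm, by
        rw [List.length_take, hx]; exact min_eq_left (Nat.le_mul_of_pos_left L B.succ_pos),
        by rw [List.length_drop, hx, Nat.succ_mul, Nat.add_sub_cancel]⟩
    rw [U.outFrom_append] at hU
    obtain ⟨hU₁, hU₂⟩ := seg_eq_append S' hU.symm
    set μ' := μ + (U.outFrom s y).length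
    have hμ'm : μ' ≤ m := by
      have := congrArg List.length hU.symm
      simp only [seg_length, List.length_append] at this
      omega
    obtain ⟨t₁, htt₁, h₁, h₁'⟩ := hf.exists_checkpoint (hμ.trans (Nat.le_add_right μ _))
    obtain ⟨w, hw, hwa⟩ := hdec (M.blockAdvice S S' t₁ μ')
    obtain ⟨w', t', hw', ht₁t', hmt', ht'm, hout⟩ :=
      ih (Fin.last L) z x' (U.stateFrom s y) t₁ μ' hz hx' h₁ h₁' hμ'm hU₂
    refine ⟨w ++ y ++ w', t', ?_, htt₁.trans ht₁t', hmt', ht'm, ?_⟩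
    · simp only [List.length_append, hw, hy, hw', Fin.val_last]
      ring
    · rw [hM.inverter_outFrom_blockStart dec hf hD htt₁ hμ (Nat.le_add_right μ _) hr h₁'
        (by omega) hU₁ hw hwa hy, hout, seg_append S htt₁ ht₁t']

theorem blockStart_zero (U : FST) (lam : Fin (L + 1)) :
    M.blockStart (D := D) S S' U.q0 0 0 lam =
      ((U.q0, M.q0, ⟨[], by simp⟩), .inr (lam, ⟨[], by simp⟩)) := by
  simp only [blockStart, seg_eq_nil S' (Nat.zero_le _), residual, List.length_nil, zero_le,
    dite_true]
  rfl

theorem IL.exists_inverter_out (hM : M.IL) (hf : M.computes S S') (hD : 0 < D) (hL : 0 < L)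
    (hdec : ∀ a, ∃ w, w.length = D ∧ dec w = a) {p : List Bool} {m : ℕ}
    (hp : U.out p = pre S' m) :
    ∃ p' t, (M.inverter U D L dec).out p' = pre S t ∧
      p'.length ≤ p.length + D * (p.length / L) + D + L + 1 ∧
      m ≤ M.outLen S t ∧ M.outLen S t ≤ m + M.maxOut := by
  have hlam : p.length % L < L := Nat.mod_lt _ hL
  have hdiv := Nat.mod_add_div' p.length L
  obtain ⟨w, t, hw, -, hmt, htm, hout⟩ :=
    hM.inverter_outFrom_blocks (U := U) (L := L) hf hD hdec m (p.length / L)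
      ⟨p.length % L, by omega⟩ (p.take (p.length % L)) (p.drop (p.length % L)) U.q0 0 0
      (by rw [List.length_take]; exact min_eq_left (Nat.mod_le _ _))
      (by rw [List.length_drop]; omega) (Nat.zero_le _) (Nat.zero_le _) (Nat.zero_le _)
      (by rw [List.take_append_drop, ← pre_eq_seg]; exact hp)
  refine ⟨List.replicate (p.length % L) false ++ true :: w, t, ?_, ?_, hmt, htm⟩
  · rw [Machine.out, Machine.blockMachine_outFrom_header _ hlam.le, pre_eq_seg, ← hout,
      blockStart_zero]
  · simp only [List.length_append, List.length_replicate, List.length_cons, hw]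
    nlinarith

end FST

namespace FST

variable {M : FST} {S S' : ℕ → Bool}

theorem IL.exists_Dfs_pre_le (hM : M.IL) (hf : M.computes S S') {ε : ℝ} (hε : 0 < ε) (k : ℕ) :
    ∃ k' C : ℕ, ∀ (U : FST) (p : List Bool) (m : ℕ), U.size ≤ k → U.out p = pre S' m →
      ∃ t, m ≤ M.outLen S t ∧ M.outLen S t ≤ m + M.maxOut ∧
        Dfs k' (pre S t) ≤ ↑(p.length + ⌈ε * p.length⌉₊ + C) := by
  have : Nonempty M.Advice := ⟨(M.q0, M.residual [], M.residual [])⟩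
  obtain ⟨D, hD, dec, hdec⟩ := exists_decoder M.Advice
  obtain ⟨L, hL, hDL⟩ : ∃ L : ℕ, 0 < L ∧ (D : ℝ) ≤ ε * L := by
    refine ⟨⌈D / ε⌉₊ + 1, Nat.succ_pos _, ?_⟩
    have := Nat.le_ceil ((D : ℝ) / ε)
    rw [div_le_iff₀ hε] at this
    push_cast
    nlinarith
  obtain ⟨k', hk'⟩ := exists_bound_of_size_le k fun U => (M.inverter U D L dec).toFST.size
  refine ⟨k', D + L + 1, fun U p m hU hp => ?_⟩
  obtain ⟨p', t, hout, hlen, hmt, htm⟩ := hM.exists_inverter_out hf hD hL hdec hp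
  refine ⟨t, hmt, htm, (Machine.Dfs_le _ (hk' U hU) hout).trans (Nat.cast_le.2 ?_)⟩
  have hblocks : D * (p.length / L) ≤ ⌈ε * p.length⌉₊ := by
    refine Nat.cast_le.1 (le_trans ?_ (Nat.le_ceil _))
    calc ((D * (p.length / L) : ℕ) : ℝ) ≤ D * ((p.length : ℝ) / L) := by
          push_cast
          exact mul_le_mul_of_nonneg_left Nat.cast_div_le (Nat.cast_nonneg _)
      _ ≤ ε * L * ((p.length : ℝ) / L) := by gcongr
      _ = ε * p.length := by field_simp [(Nat.cast_pos.2 hL).ne']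
  omega

theorem IL.le_mul_of_outLen_le (hM : M.IL) (hf : M.computes S S') {t m : ℕ}
    (h : M.outLen S t ≤ m + M.maxOut) (hm : 1 ≤ m) : t ≤ (M.maxOut + 2) * M.n * m := by
  have h₁ : M.outLen S t + 1 ≤ (M.maxOut + 2) * m := by nlinarith
  calc t ≤ (M.outLen S t + 1) * M.n := by linarith [hM.succ_le_outLen_succ_mul hf t]
    _ ≤ (M.maxOut + 2) * m * M.n := Nat.mul_le_mul_right _ h₁
    _ = (M.maxOut + 2) * M.n * m := by ring

end FST

theorem ceil_add_ceil_le_ceil {α : ℝ} (hα : 0 < α) {n m t C K : ℕ} (hn : n ≤ m)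
    (ht : t ≤ K * m) (hK : 0 < K) (hC : 8 * (C + 2) ≤ 5 * α * m) :
    ⌈α / 4 * n⌉₊ + C + ⌈α / (8 * K) * t⌉₊ ≤ ⌈α * m⌉₊ := by
  refine Nat.cast_le.1 (le_trans ?_ (Nat.le_ceil _))
  have h₁ := Nat.ceil_lt_add_one (by positivity : 0 ≤ α / 4 * n)
  have h₂ := Nat.ceil_lt_add_one (by positivity : 0 ≤ α / (8 * K) * t)
  have hn' : α / 4 * n ≤ α / 4 * m := by gcongr
  have ht' : α / (8 * K) * t ≤ α / 8 * m := by
    calc α / (8 * K) * t ≤ α / (8 * K) * (K * m) := by gcongr; exact_mod_cast ht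
      _ = α / 8 * m := by field_simp
  push_cast
  linarith

theorem FST.IL.exists_gap_pre {M : FST} {S S' : ℕ → Bool} (hM : M.IL) (hf : M.computes S S')
    {α : ℝ} (hα : 0 < α) (k : ℕ) :
    ∃ k₂, ∀ k₃, ∃ k', ∀ᶠ m : ℕ in atTop,
      Dfs k₃ (pre S' m) + (⌈α * m⌉₊ : ℕ∞) ≤ Dfs k₂ (pre S' m) →
      ∃ t, m ≤ M.outLen S t ∧
        Dfs k' (pre S t) + (⌈α / (8 * ((M.maxOut + 2) * M.n)) * t⌉₊ : ℕ∞) ≤ Dfs k (pre S t) := by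
  obtain ⟨k₂, hk₂⟩ := exists_Dfs_rdrop_out_le M k M.maxOut
  refine ⟨max k₂ Machine.id.toFST.size, fun k₃ => ?_⟩
  obtain ⟨k', C, hinv⟩ := hM.exists_Dfs_pre_le hf (ε := α / 4) (by positivity) k₃
  refine ⟨k', ?_⟩
  have hlarge : ∀ᶠ m : ℕ in atTop, (8 * (C + 2) : ℝ) ≤ 5 * α * m :=
    (tendsto_natCast_atTop_atTop.const_mul_atTop (by positivity)).eventually_ge_atTop _
  filter_upwards [eventually_ge_atTop 1, hlarge] with m hm hmC hgap
  have hle : Dfs k₃ (pre S' m) + (⌈α * m⌉₊ : ℕ∞) ≤ m :=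
    hgap.trans (by simpa [pre_length] using Dfs_le_length (le_max_right k₂ _) (pre S' m))
  obtain ⟨p, ⟨U, hU, hp⟩, hpD⟩ := exists_Dfs_eq (ne_top_of_le_ne_top (ENat.natCast_ne_top m)
    (le_trans le_self_add hle))
  obtain ⟨t, hmt, htm, ht⟩ := hinv U p m hU hp
  have hpm : p.length + ⌈α * m⌉₊ ≤ m := by exact_mod_cast hpD ▸ hle
  have hdrop : (M.out (pre S t)).rdrop (M.outLen S t - m) = pre S' m := by
    rw [hf.out_pre, List.rdrop, pre_length, pre_take, Nat.sub_sub_self hmt, min_eq_left hmt]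
  refine ⟨t, hmt, ?_⟩
  calc Dfs k' (pre S t) + (⌈α / (8 * ((M.maxOut + 2) * M.n)) * t⌉₊ : ℕ∞)
      ≤ ↑(p.length + ⌈α / 4 * p.length⌉₊ + C) + (⌈α / (8 * ((M.maxOut + 2) * M.n)) * t⌉₊ : ℕ∞) :=
        by gcongr
    _ ≤ p.length + (⌈α * m⌉₊ : ℕ∞) := by
        have := ceil_add_ceil_le_ceil hα (n := p.length) (by omega)
          (hM.le_mul_of_outLen_le hf htm hm) (Nat.mul_pos (by omega) M.npos) hmC
        push_cast at this
        have h : p.length + ⌈α / 4 * p.length⌉₊ + C + ⌈α / (8 * ((M.maxOut + 2) * M.n)) * t⌉₊ ≤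
            p.length + ⌈α * m⌉₊ := by omega
        exact_mod_cast h
    _ ≤ Dfs (max k₂ Machine.id.toFST.size) (pre S' m) := hpD ▸ hgap
    _ ≤ Dfs k₂ (pre S' m) := Dfs_anti (le_max_left _ _) _
    _ ≤ Dfs k (pre S t) := hdrop ▸ hk₂ _ (by omega) (pre S t)

/-- Finite-state slow growth law: if `S' = f(S)` for an ILFS computable `f`
(computed by the information lossless FST `M`) and `S'` is finite-state deep,
then `S` is finite-state deep. -/
theorem fs_slow_growth_law (S S' : ℕ → Bool) (M : FST) (hM : M.IL)
    (hf : M.computes S S') (hdeep : FSDeep S') : FSDeep S := by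
  obtain ⟨α, hα, hS'⟩ := hdeep
  have hn : (0 : ℝ) < M.n := Nat.cast_pos.2 M.npos
  refine ⟨α / (8 * ((M.maxOut + 2) * M.n)), by positivity, fun k => ?_⟩
  obtain ⟨k₂, hk₂⟩ := hM.exists_gap_pre hf hα k
  obtain ⟨k₃, hk₃⟩ := hS' k₂
  obtain ⟨k', hk'⟩ := hk₂ k₃
  refine ⟨k', frequently_atTop.2 fun N => ?_⟩
  obtain ⟨m, hgap, hm, hmN⟩ :=
    (hk₃.and_eventually (hk'.and (eventually_ge_atTop ((M.maxOut + 1) * N)))).exists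
  obtain ⟨t, hmt, ht⟩ := hm hgap
  refine ⟨t, Nat.le_of_mul_le_mul_left ?_ M.maxOut.succ_pos, ht⟩
  linarith [M.outLen_le S t]
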